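/- arXiv:1902.03515 — 6 statements merged into one kernel-verified Lean document; each statement's English description precedes it below -/
import Mathlib

section
/- Suppose for every i ∈ {1,…,k} the autoencoder (E_i, D_i) is optimal. For each i define the joint measure Q^{(i)} on 𝒳₁ × ⋯ × 𝒳ₖ as the pushforward of P_{X_i} ⊗ (⊗_{j≠i} P_{N_j}) under the map sending (x, (n_j)_{j≠i}) to the k-tuple whose i-th coordinate is x and whose j-th coordinate, for j ≠ i, is D_j(π^Z(E_i(x)), n_j). Then for every i, Q^{(i)} equals the pushforward of P_Z ⊗ (⊗_{j=1}^k P_{N_j}) under the map (z, (n_1,…,n_k)) ↦ (D_1(z,n_1), …, D_k(z,n_k)); in particular Q^{(1)} = Q^{(2)} = ⋯ = Q^{(k)} (global consistency). -/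
/-!
Almost surely `x = D i (E i x)`, so the `i`-th coordinate of a `Q^{(i)}`-sample is also the
decoding of `E i x = (z, n_i)`. Hence `Q^{(i)}` is the law of `(D j (z, n_j))_j`, and
`(z, n_i, (n_j)_{j ≠ i})` has law `P_Z ⊗ ⊗_j P_{N j}` because `E i` pushes `P_{X i}` to
`P_Z ⊗ P_{N i}`.
-/

open MeasureTheory

section PiSplitAt

variable {ι : Type*} [DecidableEq ι] {β : ι → Type*} [∀ j, MeasurableSpace (β j)]

theorem measurable_piSplitAt_symm (i : ι) : Measurable (Equiv.piSplitAt i β).symm := by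
  refine measurable_pi_lambda _ fun j => ?_
  by_cases h : j = i
  · subst h
    simpa using measurable_fst
  · simp only [Equiv.piSplitAt_symm_apply, h, dite_false]
    exact (measurable_pi_apply _).comp measurable_snd

theorem measurePreserving_piSplitAt_symm [Fintype ι] (μ : ∀ j, Measure (β j))
    [∀ j, SigmaFinite (μ j)] (i : ι) :
    MeasurePreserving (Equiv.piSplitAt i β).symm
      ((μ i).prod (Measure.pi fun j : {j // j ≠ i} => μ j)) (Measure.pi μ) := by
  refine ⟨measurable_piSplitAt_symm i, (Measure.pi_eq fun s hs => ?_).symm⟩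
  have hpre : (Equiv.piSplitAt i β).symm ⁻¹' Set.univ.pi s
      = s i ×ˢ Set.univ.pi fun j : {j // j ≠ i} => s j := by
    ext ⟨x, p⟩
    simp only [Set.mem_preimage, Set.mem_univ_pi, Set.mem_prod]
    refine ⟨fun h => ⟨by simpa using h i, fun j => by simpa [j.2] using h j⟩, ?_⟩
    rintro ⟨hx, hp⟩ j
    by_cases hj : j = i
    · subst hj
      simpa using hx
    · simpa [hj] using hp ⟨j, hj⟩
  rw [Measure.map_apply (measurable_piSplitAt_symm i) (.univ_pi hs), hpre, Measure.prod_prod,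
    Measure.pi_pi, Fintype.prod_eq_mul_prod_compl i,
    Finset.prod_subtype (p := (· ≠ i)) _ fun j => by simp]

end PiSplitAt

theorem MeasureTheory.MeasurePreserving.map_eq_of_ae_eq_comp {α β γ : Type*} [MeasurableSpace α]
    [MeasurableSpace β] [MeasurableSpace γ] {μ : Measure α} {ν : Measure β} {e : α → β}
    {f : α → γ} {g : β → γ} (he : MeasurePreserving e μ ν) (hg : Measurable g)
    (hfg : f =ᵐ[μ] g ∘ e) : μ.map f = ν.map g := by
  rw [Measure.map_congr hfg, ← Measure.map_map hg he.measurable, he.map_eq]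

theorem global_consistency_general {k : ℕ}
    (X : Fin k → Type*) [∀ i, MeasurableSpace (X i)]
    (Z : Type*) [MeasurableSpace Z]
    (N : Fin k → Type*) [∀ i, MeasurableSpace (N i)]
    (PX : ∀ i, Measure (X i)) [∀ i, IsProbabilityMeasure (PX i)]
    (PZ : Measure Z) [IsProbabilityMeasure PZ]
    (PN : ∀ i, Measure (N i)) [∀ i, IsProbabilityMeasure (PN i)]
    (E : ∀ i, X i → Z × N i) (D : ∀ i, Z × N i → X i)
    (hE : ∀ i, Measurable (E i)) (hD : ∀ i, Measurable (D i))
    (hrec : ∀ i, ∀ᵐ x ∂(PX i), D i (E i x) = x)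
    (hlat : ∀ i, (PX i).map (E i) = PZ.prod (PN i)) :
    ∀ i : Fin k,
      Measure.map
        (fun p : X i × (∀ j : {j : Fin k // j ≠ i}, N j) =>
          fun j : Fin k =>
            if h : j = i then cast (congrArg X h.symm) p.1
            else D j ((E i p.1).1, p.2 ⟨j, h⟩))
        ((PX i).prod (Measure.pi fun j : {j : Fin k // j ≠ i} => PN j))
      = Measure.map
          (fun p : Z × (∀ j, N j) => fun j : Fin k => D j (p.1, p.2 j))
          (PZ.prod (Measure.pi fun j => PN j)) := by
  intro i
  have hencode : MeasurePreserving
      (fun p : X i × (∀ j : {j // j ≠ i}, N j) =>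
        ((E i p.1).1, (Equiv.piSplitAt i N).symm ((E i p.1).2, p.2)))
      ((PX i).prod (Measure.pi fun j : {j // j ≠ i} => PN j))
      (PZ.prod (Measure.pi PN)) :=
    ((MeasurePreserving.id PZ).prod (measurePreserving_piSplitAt_symm PN i)).comp <|
      (measurePreserving_prodAssoc PZ (PN i) _).comp <|
        (MeasurePreserving.mk (hE i) (hlat i)).prod (.id _)
  have hdecode : Measurable (fun p : Z × (∀ j, N j) => fun j : Fin k => D j (p.1, p.2 j)) :=
    measurable_pi_lambda _ fun j =>
      (hD j).comp (measurable_fst.prodMk ((measurable_pi_apply j).comp measurable_snd))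
  refine hencode.map_eq_of_ae_eq_comp hdecode ?_
  filter_upwards [Measure.quasiMeasurePreserving_fst.ae (hrec i)] with p hp
  funext j
  by_cases h : j = i
  · subst h
    simp [hp]
  · simp [h]

/-- Global consistency: if every autoencoder `(E i, D i)` is optimal (zero reconstruction loss
and encoded distribution `E i # P_{X i} = P_Z ⊗ P_{N i}`), then for every source domain `i` the
joint measure `Q^{(i)}` — the pushforward of `P_{X i} ⊗ (⊗_{j ≠ i} P_{N j})` under
`(x, (n_j)_{j≠i}) ↦ (tuple with i-th coordinate x and j-th coordinate D j (π^Z (E i x), n j))` —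
equals the pushforward of `P_Z ⊗ (⊗_j P_{N j})` under `(z, n) ↦ (D j (z, n j))_j`; in particular
`Q^{(1)} = ⋯ = Q^{(k)}`. -/
theorem global_consistency {k : ℕ}
    (X : Fin k → Type*) [∀ i, MeasurableSpace (X i)] [∀ i, StandardBorelSpace (X i)]
    (Z : Type*) [MeasurableSpace Z] [StandardBorelSpace Z]
    (N : Fin k → Type*) [∀ i, MeasurableSpace (N i)] [∀ i, StandardBorelSpace (N i)]
    (PX : ∀ i, Measure (X i)) [∀ i, IsProbabilityMeasure (PX i)]
    (PZ : Measure Z) [IsProbabilityMeasure PZ]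
    (PN : ∀ i, Measure (N i)) [∀ i, IsProbabilityMeasure (PN i)]
    (E : ∀ i, X i → Z × N i) (D : ∀ i, Z × N i → X i)
    (hE : ∀ i, Measurable (E i)) (hD : ∀ i, Measurable (D i))
    (hrec : ∀ i, ∀ᵐ x ∂(PX i), D i (E i x) = x)
    (hlat : ∀ i, (PX i).map (E i) = PZ.prod (PN i)) :
    ∀ i : Fin k,
      Measure.map
        (fun p : X i × (∀ j : {j : Fin k // j ≠ i}, N j) =>
          fun j : Fin k =>
            if h : j = i then cast (congrArg X h.symm) p.1
            else D j ((E i p.1).1, p.2 ⟨j, h⟩))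
        ((PX i).prod (Measure.pi fun j : {j : Fin k // j ≠ i} => PN j))
      = Measure.map
          (fun p : Z × (∀ j, N j) => fun j : Fin k => D j (p.1, p.2 j))
          (PZ.prod (Measure.pi fun j => PN j)) :=
  global_consistency_general X Z N PX PZ PN E D hE hD hrec hlat
end

section
/- Suppose for every i ∈ {1,…,k} the autoencoder (E_i, D_i) is optimal. Let (i_1, …, i_ℓ) with ℓ ≥ 2 be any sequence of domain indices. Define the chained transport by x_1 := x and x_{m+1} := D_{i_{m+1}}(π^Z(E_{i_m}(x_m)), n_{m+1}) for m = 1,…,ℓ−1. Then the pushforward of P_{X_{i_1}} ⊗ P_{N_{i_2}} ⊗ ⋯ ⊗ P_{N_{i_ℓ}} under the map (x, n_2, …, n_ℓ) ↦ (x, x_ℓ) equals the pushforward of P_{X_{i_1}} ⊗ P_{N_{i_ℓ}} under the map (x, n) ↦ (x, D_{i_ℓ}(π^Z(E_{i_1}(x)), n)). Equivalently, every sequence of encodings and decodings starting in domain i_1 and ending in domain i_ℓ induces the same joint distribution of input and output as the direct one-step translation (path consistency). -/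
/-!
Re-encoding a decoded point recovers its latent code: `π^Z (E_j (D_j (z, n))) = z` for
`P_Z ⊗ P_{N_j}`-almost every `(z, n)`, because `E_j` pushes `P_{X_j}` onto that measure and
`D_j ∘ E_j = id` almost everywhere. Along a chain the pair `(π^Z (E_{i_1} x), n_m)` again has law
`P_Z ⊗ P_{N_{i_m}}`, so the latent code of the input passes unchanged through every intermediate
domain and the intermediate noises integrate out; by induction on the length of the chain only the
input's latent code and the last noise remain, which is the one-step translation.
-/

open MeasureTheory

/-- The chained transport along a sequence of domains `s 0, s 1, …`:
`x_0 := x` and `x_{m+1} := D_{s(m+1)}(π^Z(E_{s m}(x_m)), n_{m+1})`. -/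
def chainTransport {k : ℕ} {X : Fin k → Type*} {Z : Type*} {N : Fin k → Type*}
    (E : ∀ i, X i → Z × N i) (D : ∀ i, Z × N i → X i)
    (s : ℕ → Fin k) (x : X (s 0)) :
    (T : ℕ) → (n : ∀ m : Fin T, N (s (m + 1))) → X (s T)
  | 0, _ => x
  | T + 1, n =>
      D (s (T + 1))
        ((E (s T) (chainTransport E D s x T fun m => n m.castSucc)).1, n (Fin.last T))

lemma measurePreserving_snoc {n : ℕ} {α : Fin (n + 1) → Type*} [∀ i, MeasurableSpace (α i)]
    (μ : ∀ i, Measure (α i)) [∀ i, SigmaFinite (μ i)] :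
    MeasurePreserving
      (fun p : (∀ i : Fin n, α i.castSucc) × α (Fin.last n) => (Fin.snoc p.1 p.2 : ∀ i, α i))
      ((Measure.pi fun i => μ i.castSucc).prod (μ (Fin.last n))) (Measure.pi μ) := by
  have hmeas : Measurable
      fun p : (∀ i : Fin n, α i.castSucc) × α (Fin.last n) => (Fin.snoc p.1 p.2 : ∀ i, α i) := by
    refine measurable_pi_iff.2 fun i => ?_
    induction i using Fin.lastCases with
    | last => simp only [Fin.snoc_last]; fun_prop
    | cast j => simp only [Fin.snoc_castSucc]; fun_prop
  refine ⟨hmeas, (Measure.pi_eq fun s hs => ?_).symm⟩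
  have hpre : (fun p : (∀ i : Fin n, α i.castSucc) × α (Fin.last n) =>
      (Fin.snoc p.1 p.2 : ∀ i, α i)) ⁻¹' Set.univ.pi s
      = (Set.univ.pi fun j : Fin n => s j.castSucc) ×ˢ s (Fin.last n) := by
    ext ⟨f, a⟩
    simp [Fin.forall_fin_succ']
  rw [Measure.map_apply hmeas (.univ_pi hs), hpre, Measure.prod_prod, Measure.pi_pi,
    Fin.prod_univ_castSucc]

lemma measurePreserving_prod_snoc {β : Type*} [MeasurableSpace β] (ν : Measure β) [SFinite ν]
    {n : ℕ} {α : Fin (n + 1) → Type*} [∀ i, MeasurableSpace (α i)]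
    (μ : ∀ i, Measure (α i)) [∀ i, SigmaFinite (μ i)] :
    MeasurePreserving
      (fun q : (β × ∀ i : Fin n, α i.castSucc) × α (Fin.last n) =>
        (q.1.1, (Fin.snoc q.1.2 q.2 : ∀ i, α i)))
      ((ν.prod (Measure.pi fun i => μ i.castSucc)).prod (μ (Fin.last n)))
      (ν.prod (Measure.pi μ)) :=
  ((MeasurePreserving.id ν).prod (measurePreserving_snoc μ)).comp
    (measurePreserving_prodAssoc _ _ _)

lemma MeasureTheory.Measure.map_prod_left {α β γ : Type*} [MeasurableSpace α] [MeasurableSpace β]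
    [MeasurableSpace γ] {f : α → β} (hf : Measurable f) (μ : Measure α) (ν : Measure γ)
    [SFinite μ] [SFinite ν] :
    (μ.map f).prod ν = (μ.prod ν).map (Prod.map f id) := by
  simpa using Measure.map_prod_map μ ν hf measurable_id

structure IsOptimalAutoencoder {X Z N : Type*} [MeasurableSpace X] [MeasurableSpace Z]
    [MeasurableSpace N] (PX : Measure X) (PZ : Measure Z) (PN : Measure N)
    (E : X → Z × N) (D : Z × N → X) : Prop where
  measurable_encode : Measurable E
  measurable_decode : Measurable D
  ae_decode_encode : ∀ᵐ x ∂PX, D (E x) = x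
  map_encode : PX.map E = PZ.prod PN

namespace IsOptimalAutoencoder

variable {X Z N : Type*} [MeasurableSpace X] [MeasurableSpace Z] [MeasurableSpace N]
  {PX : Measure X} {PZ : Measure Z} {PN : Measure N} {E : X → Z × N} {D : Z × N → X}

lemma measurePreserving_latent [IsProbabilityMeasure PN]
    (h : IsOptimalAutoencoder PX PZ PN E D) : MeasurePreserving (fun x => (E x).1) PX PZ :=
  measurePreserving_fst.comp ⟨h.measurable_encode, h.map_encode⟩

lemma ae_latent_encode_decode [MeasurableEq Z] (h : IsOptimalAutoencoder PX PZ PN E D) :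
    ∀ᵐ p ∂PZ.prod PN, (E (D p)).1 = p.1 := by
  rw [← h.map_encode, ae_map_iff h.measurable_encode.aemeasurable
    (measurableSet_eq_fun (f := fun p => (E (D p)).1)
      (h.measurable_encode.comp h.measurable_decode).fst measurable_fst)]
  filter_upwards [h.ae_decode_encode] with x hx
  rw [hx]

end IsOptimalAutoencoder

section Translation

variable {X Y Z N M K W : Type*} [MeasurableSpace X] [MeasurableSpace Y] [MeasurableSpace Z]
  [MeasurableSpace M] [MeasurableSpace K] [MeasurableSpace W]

def translation (E : X → Z × N) (D : Z × M → Y) (p : X × M) : X × Y :=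
  (p.1, D ((E p.1).1, p.2))

def outputTranslation (E : Y → Z × N) (D : Z × K → W) (q : (X × Y) × K) : X × W :=
  (q.1.1, D ((E q.1.2).1, q.2))

lemma measurable_translation {E : X → Z × N} {D : Z × M → Y}
    (hE : Measurable fun x => (E x).1) (hD : Measurable D) : Measurable (translation E D) :=
  measurable_fst.prodMk (hD.comp ((hE.comp measurable_fst).prodMk measurable_snd))

lemma measurable_outputTranslation {E : Y → Z × N} {D : Z × K → W}
    (hE : Measurable fun y => (E y).1) (hD : Measurable D) :
    Measurable (outputTranslation (X := X) E D) :=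
  measurable_fst.fst.prodMk (hD.comp ((hE.comp measurable_fst.snd).prodMk measurable_snd))

lemma map_outputTranslation_translation [MeasurableEq Z]
    {PX : Measure X} {PZ : Measure Z} {PY : Measure Y} {PM : Measure M} {PK : Measure K}
    [SFinite PX] [IsProbabilityMeasure PM] [SFinite PK]
    {E : X → Z × N} {E' : Y → Z × M} {D' : Z × M → Y} {D'' : Z × K → W}
    (hE : MeasurePreserving (fun x => (E x).1) PX PZ) (h' : IsOptimalAutoencoder PY PZ PM E' D')
    (hD'' : Measurable D'') :
    (((PX.prod PM).map (translation E D')).prod PK).map (outputTranslation E' D'')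
      = (PX.prod PK).map (translation E D'') := by
  have hlatent := hE.prod (MeasurePreserving.id PM)
  have hroundtrip : ∀ᵐ q ∂(PX.prod PM).prod PK,
      (E' (D' ((E q.1.1).1, q.1.2))).1 = (E q.1.1).1 :=
    Measure.quasiMeasurePreserving_fst.ae
      (hlatent.quasiMeasurePreserving.ae h'.ae_latent_encode_decode)
  calc (((PX.prod PM).map (translation E D')).prod PK).map (outputTranslation E' D'')
      = ((PX.prod PM).prod PK).map
          (outputTranslation E' D'' ∘ Prod.map (translation E D') id) := by
        rw [Measure.map_prod_left (measurable_translation hE.measurable h'.measurable_decode),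
          Measure.map_map (measurable_outputTranslation h'.measurable_encode.fst hD'')
            ((measurable_translation hE.measurable h'.measurable_decode).prodMap measurable_id)]
    _ = ((PX.prod PM).prod PK).map (translation E D'' ∘ Prod.map Prod.fst id) := by
        refine Measure.map_congr ?_
        filter_upwards [hroundtrip] with q hq
        simp [translation, outputTranslation, hq]
    _ = (PX.prod PK).map (translation E D'') := by
        rw [← Measure.map_map (measurable_translation hE.measurable hD'')
          (measurable_fst.prodMap measurable_id),
          ((measurePreserving_fst (μ := PX) (ν := PM)).prod (.id PK)).map_eq]

end Translation

section Chain

variable {k : ℕ} {X : Fin k → Type*} [∀ i, MeasurableSpace (X i)] {Z : Type*}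
  [MeasurableSpace Z] {N : Fin k → Type*} [∀ i, MeasurableSpace (N i)]
  {E : ∀ i, X i → Z × N i} {D : ∀ i, Z × N i → X i} {s : ℕ → Fin k}

lemma measurable_chainTransport (hE : ∀ i, Measurable (E i)) (hD : ∀ i, Measurable (D i)) :
    ∀ T, Measurable fun p : X (s 0) × (∀ m : Fin T, N (s (m + 1))) =>
      chainTransport E D s p.1 T p.2
  | 0 => measurable_fst
  | T + 1 => by
    have hprev := measurable_chainTransport hE hD T
    simp only [chainTransport]
    fun_prop

lemma map_chainTransport_one (PX : Measure (X (s 0))) [SFinite PX]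
    (PN : ∀ i, Measure (N i)) [∀ i, IsProbabilityMeasure (PN i)]
    (hE : Measurable (E (s 0))) (hD : Measurable (D (s 1))) :
    (PX.prod (Measure.pi fun m : Fin 1 => PN (s (m + 1)))).map
        (fun p => (p.1, chainTransport E D s p.1 1 p.2))
      = (PX.prod (PN (s 1))).map (translation (E (s 0)) (D (s 1))) := by
  rw [show (fun p : X (s 0) × (∀ m : Fin 1, N (s (m + 1))) =>
      (p.1, chainTransport E D s p.1 1 p.2))
      = translation (E (s 0)) (D (s 1)) ∘ Prod.map id (Function.eval 0) from rfl,
    ← Measure.map_map (measurable_translation hE.fst hD)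
      (measurable_id.prodMap (measurable_pi_apply 0)),
    ((MeasurePreserving.id PX).prod (measurePreserving_eval _ 0)).map_eq]
  rfl

lemma map_chainTransport_succ (PX : Measure (X (s 0))) [SFinite PX]
    (PN : ∀ i, Measure (N i)) [∀ i, SigmaFinite (PN i)]
    (hE : ∀ i, Measurable (E i)) (hD : ∀ i, Measurable (D i)) (T : ℕ) :
    (PX.prod (Measure.pi fun m : Fin (T + 1) => PN (s (m + 1)))).map
        (fun p => (p.1, chainTransport E D s p.1 (T + 1) p.2))
      = (((PX.prod (Measure.pi fun m : Fin T => PN (s (m + 1)))).map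
          (fun p => (p.1, chainTransport E D s p.1 T p.2))).prod (PN (s (T + 1)))).map
        (outputTranslation (E (s T)) (D (s (T + 1)))) := by
  have hsnoc := measurePreserving_prod_snoc PX fun m : Fin (T + 1) => PN (s (m + 1))
  have hchain := measurable_fst.prodMk (measurable_chainTransport (s := s) hE hD T)
  rw [← hsnoc.map_eq, Measure.map_map (measurable_fst.prodMk
      (measurable_chainTransport hE hD (T + 1))) hsnoc.measurable,
    Measure.map_prod_left hchain, Measure.map_map
      (measurable_outputTranslation (hE _).fst (hD _)) (hchain.prodMap measurable_id)]
  congr 1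
  funext ⟨⟨x, n⟩, a⟩
  simp [chainTransport, outputTranslation]

end Chain

theorem path_consistency_general {k : ℕ}
    (X : Fin k → Type*) [∀ i, MeasurableSpace (X i)]
    (Z : Type*) [MeasurableSpace Z] [StandardBorelSpace Z]
    (N : Fin k → Type*) [∀ i, MeasurableSpace (N i)]
    (PX : ∀ i, Measure (X i)) [∀ i, IsProbabilityMeasure (PX i)]
    (PZ : Measure Z)
    (PN : ∀ i, Measure (N i)) [∀ i, IsProbabilityMeasure (PN i)]
    (E : ∀ i, X i → Z × N i) (D : ∀ i, Z × N i → X i)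
    (hE : ∀ i, Measurable (E i)) (hD : ∀ i, Measurable (D i))
    (hrec : ∀ i, ∀ᵐ x ∂(PX i), D i (E i x) = x)
    (hlat : ∀ i, (PX i).map (E i) = PZ.prod (PN i))
    (L : ℕ) (s : ℕ → Fin k) :
    Measure.map
      (fun p : X (s 0) × (∀ m : Fin (L + 1), N (s (m + 1))) =>
        (p.1, chainTransport E D s p.1 (L + 1) p.2))
      ((PX (s 0)).prod (Measure.pi fun m : Fin (L + 1) => PN (s (m + 1))))
    = Measure.map
        (fun p : X (s 0) × N (s (L + 1)) => (p.1, D (s (L + 1)) ((E (s 0) p.1).1, p.2)))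
        ((PX (s 0)).prod (PN (s (L + 1)))) := by
  have hopt i : IsOptimalAutoencoder (PX i) PZ (PN i) (E i) (D i) :=
    ⟨hE i, hD i, hrec i, hlat i⟩
  induction L with
  | zero => exact map_chainTransport_one _ PN (hE _) (hD _)
  | succ L ih =>
    rw [map_chainTransport_succ _ PN hE hD, ih]
    exact map_outputTranslation_translation (hopt _).measurePreserving_latent (hopt _) (hD _)

/-- Path consistency: if every autoencoder `(E i, D i)` is optimal (zero reconstruction loss and
encoded distribution `E i # P_{X i} = P_Z ⊗ P_{N i}`), then for any sequence of domain indices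
`(s 0, …, s (L+1))` of length `ℓ = L + 2 ≥ 2`, the joint distribution of `(x, x_ℓ)` under the
chained transport — the pushforward of `P_{X_{s 0}} ⊗ P_{N_{s 1}} ⊗ ⋯ ⊗ P_{N_{s (L+1)}}` —
equals the joint distribution of input and output of the direct one-step translation, the
pushforward of `P_{X_{s 0}} ⊗ P_{N_{s (L+1)}}` under `(x, n) ↦ (x, D_{s(L+1)}(π^Z(E_{s 0} x), n))`. -/
theorem path_consistency {k : ℕ}
    (X : Fin k → Type*) [∀ i, MeasurableSpace (X i)] [∀ i, StandardBorelSpace (X i)]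
    (Z : Type*) [MeasurableSpace Z] [StandardBorelSpace Z]
    (N : Fin k → Type*) [∀ i, MeasurableSpace (N i)] [∀ i, StandardBorelSpace (N i)]
    (PX : ∀ i, Measure (X i)) [∀ i, IsProbabilityMeasure (PX i)]
    (PZ : Measure Z) [IsProbabilityMeasure PZ]
    (PN : ∀ i, Measure (N i)) [∀ i, IsProbabilityMeasure (PN i)]
    (E : ∀ i, X i → Z × N i) (D : ∀ i, Z × N i → X i)
    (hE : ∀ i, Measurable (E i)) (hD : ∀ i, Measurable (D i))
    (hrec : ∀ i, ∀ᵐ x ∂(PX i), D i (E i x) = x)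
    (hlat : ∀ i, (PX i).map (E i) = PZ.prod (PN i))
    (L : ℕ) (s : ℕ → Fin k) :
    Measure.map
      (fun p : X (s 0) × (∀ m : Fin (L + 1), N (s (m + 1))) =>
        (p.1, chainTransport E D s p.1 (L + 1) p.2))
      ((PX (s 0)).prod (Measure.pi fun m : Fin (L + 1) => PN (s (m + 1))))
    = Measure.map
        (fun p : X (s 0) × N (s (L + 1)) => (p.1, D (s (L + 1)) ((E (s 0) p.1).1, p.2)))
        ((PX (s 0)).prod (PN (s (L + 1)))) :=
  path_consistency_general X Z N PX PZ PN E D hE hD hrec hlat L s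
end

section
/- Suppose the autoencoders (E_i, D_i) and (E_j, D_j) are both optimal. Then the distribution of the translated variable from domain i to domain j equals the true marginal of domain j; that is, the pushforward of P_{X_i} ⊗ P_{N_j} under the map (x, n) ↦ D_j(π^Z(E_i(x)), n) equals P_{X_j}. -/
open MeasureTheory

/-!
The translated sample is `D_j(z, n)` with `z` the latent code of a sample of domain `i`. Since
`E_i # P_{X_i} = P_Z ⊗ P_{N_i}`, the code `z` has law `P_Z`, so `(z, n)` has law `P_Z ⊗ P_{N_j}`,
which is `E_j # P_{X_j}`. Decoding it with `D_j` returns `P_{X_j}`, because `D_j ∘ E_j = id`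
holds `P_{X_j}`-almost everywhere.
-/

namespace MeasureTheory.Measure

variable {α β γ δ : Type*} [MeasurableSpace α] [MeasurableSpace β] [MeasurableSpace γ]
  [MeasurableSpace δ]

lemma map_fst_comp_of_map_eq_prod {μ : Measure α} {f : α → β × γ} (hf : Measurable f)
    {ν : Measure β} {ρ : Measure γ} [IsProbabilityMeasure ρ] (h : μ.map f = ν.prod ρ) :
    μ.map (fun x => (f x).1) = ν := by
  change μ.map (Prod.fst ∘ f) = ν
  rw [← map_map measurable_fst hf, h]
  exact fst_prod

lemma map_eq_of_map_eq_of_ae_leftInverse {μ : Measure α} {ν : Measure β} {E : α → β}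
    {D : β → α} (hE : Measurable E) (hD : Measurable D) (hDE : ∀ᵐ x ∂μ, D (E x) = x)
    (h : μ.map E = ν) : ν.map D = μ := by
  rw [← h, map_map hD hE]
  exact (map_congr (g := id) hDE).trans map_id

lemma map_prod_comp_fst {μ : Measure α} [SFinite μ] {ν : Measure γ} [SFinite ν] {g : α → β}
    (hg : Measurable g) {D : β × γ → δ} (hD : Measurable D) :
    (μ.prod ν).map (fun p => D (g p.1, p.2)) = ((μ.map g).prod ν).map D := by
  conv_rhs => rw [← map_id (μ := ν), map_prod_map μ ν hg measurable_id,
    map_map hD (hg.prodMap measurable_id)]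
  rfl

end MeasureTheory.Measure

theorem translation_matches_marginal_general
    {Xi Xj Z Ni Nj : Type*}
    [MeasurableSpace Xi]
    [MeasurableSpace Xj]
    [MeasurableSpace Z]
    [MeasurableSpace Ni]
    [MeasurableSpace Nj]
    (PXi : Measure Xi) [IsProbabilityMeasure PXi]
    (PXj : Measure Xj)
    (PZ : Measure Z)
    (PNi : Measure Ni) [IsProbabilityMeasure PNi]
    (PNj : Measure Nj) [IsProbabilityMeasure PNj]
    (Ei : Xi → Z × Ni)
    (Ej : Xj → Z × Nj) (Dj : Z × Nj → Xj)
    (hEi : Measurable Ei)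
    (hEj : Measurable Ej) (hDj : Measurable Dj)
    (hlati : PXi.map Ei = PZ.prod PNi)
    (hrecj : ∀ᵐ x ∂PXj, Dj (Ej x) = x)
    (hlatj : PXj.map Ej = PZ.prod PNj) :
    Measure.map (fun p : Xi × Nj => Dj ((Ei p.1).1, p.2)) (PXi.prod PNj) = PXj := by
  rw [Measure.map_prod_comp_fst hEi.fst hDj, Measure.map_fst_comp_of_map_eq_prod hEi hlati]
  exact Measure.map_eq_of_map_eq_of_ae_leftInverse hEj hDj hrecj hlatj

/-- If the autoencoders of domains `i` and `j` are both optimal (zero reconstruction loss and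
encoded distribution equal to `P_Z ⊗ P_N`), then the translated distribution
`(x, n) ↦ D_j(π^Z(E_i x), n) # (P_{X_i} ⊗ P_{N_j})` equals the true marginal `P_{X_j}`. -/
theorem translation_matches_marginal
    {Xi Xj Z Ni Nj : Type*}
    [MeasurableSpace Xi] [StandardBorelSpace Xi]
    [MeasurableSpace Xj] [StandardBorelSpace Xj]
    [MeasurableSpace Z] [StandardBorelSpace Z]
    [MeasurableSpace Ni] [StandardBorelSpace Ni]
    [MeasurableSpace Nj] [StandardBorelSpace Nj]
    (PXi : Measure Xi) [IsProbabilityMeasure PXi]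
    (PXj : Measure Xj) [IsProbabilityMeasure PXj]
    (PZ : Measure Z) [IsProbabilityMeasure PZ]
    (PNi : Measure Ni) [IsProbabilityMeasure PNi]
    (PNj : Measure Nj) [IsProbabilityMeasure PNj]
    (Ei : Xi → Z × Ni) (Di : Z × Ni → Xi)
    (Ej : Xj → Z × Nj) (Dj : Z × Nj → Xj)
    (hEi : Measurable Ei) (hDi : Measurable Di)
    (hEj : Measurable Ej) (hDj : Measurable Dj)
    (hreci : ∀ᵐ x ∂PXi, Di (Ei x) = x)
    (hlati : PXi.map Ei = PZ.prod PNi)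
    (hrecj : ∀ᵐ x ∂PXj, Dj (Ej x) = x)
    (hlatj : PXj.map Ej = PZ.prod PNj) :
    Measure.map (fun p : Xi × Nj => Dj ((Ei p.1).1, p.2)) (PXi.prod PNj) = PXj :=
  translation_matches_marginal_general PXi PXj PZ PNi PNj Ei Ej Dj hEi hEj hDj hlati hrecj hlatj
end

section
/- (Transport error bound, coupling form) Fix domains i and j and suppose D_j : 𝒵 × 𝒩_j → 𝒳_j is γ_j-Lipschitz. Define Q_{X_{i→j}} as the pushforward of P_{X_i} ⊗ P_{N_j} under (x, n) ↦ D_j(π^Z(E_i(x)), n). Then for every coupling γ₁ of E_i # P_{X_i} and P_Z ⊗ P_{N_i} (measures on 𝒵 × 𝒩_i) and every coupling γ₂ of P_Z ⊗ P_{N_j} and E_j # P_{X_j} (measures on 𝒵 × 𝒩_j), there exists a coupling π of Q_{X_{i→j}} and P_{X_j} such that ∫ d_j(x, y) dπ(x, y) ≤ γ_j ∫ d̃_i(u, v) dγ₁(u, v) + γ_j ∫ d̃_j(u, v) dγ₂(u, v) + ∫ d_j(x, D_j(E_j(x))) dP_{X_j}(x). -/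
/-!
Gluing. Draw `(u, v) ∼ γ₁` and, independently, noise `n ∼ P_{N_j}`. Then `(v.1, n)` has law
`P_Z ⊗ P_{N_j}`, the first marginal of `γ₂`, so `γ₂` can be glued on to produce `w` with
`((v.1, n), w) ∼ γ₂`; in turn `w ∼ E_j # P_{X_j}`, so the coupling `y ↦ (E_j y, y)` can be
glued on to produce `y ∼ P_{X_j}` with `w = E_j y` almost surely. The law of
`(D_j (u.1, n), y)` couples `Q_{X_{i→j}}` with `P_{X_j}`, and the triangle inequality through
`D_j (v.1, n)` and `D_j w`, together with the Lipschitz bound on `D_j`, produces the three terms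
of the bound.
-/

open MeasureTheory ProbabilityTheory

theorem MeasureTheory.Measure.exists_gluing {Ω β γ : Type*} [MeasurableSpace Ω]
    [MeasurableSpace β] [MeasurableSpace γ] [StandardBorelSpace γ] [Nonempty γ]
    (μ : Measure Ω) [IsProbabilityMeasure μ] {f : Ω → β} (hf : Measurable f)
    (ν : Measure (β × γ)) [IsFiniteMeasure ν] (hν : ν.fst = μ.map f) :
    ∃ ξ : Measure (Ω × γ), IsProbabilityMeasure ξ ∧ MeasurePreserving Prod.fst ξ μ ∧
      MeasurePreserving (fun p => (f p.1, p.2)) ξ ν := by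
  have hg : Measurable fun p : Ω × γ => (f p.1, p.2) := by fun_prop
  -- Disintegrate `ν` along its first coordinate and feed the conditional kernel `f ω`.
  refine ⟨μ ⊗ₘ ν.condKernel.comap f hf, inferInstance,
    ⟨measurable_fst, Measure.fst_compProd _ _⟩, ⟨hg, ?_⟩⟩
  conv_rhs => rw [← ν.disintegrate ν.condKernel, hν]
  ext s hs
  rw [Measure.map_apply hg hs, Measure.compProd_apply (hg hs), Measure.compProd_apply hs,
    lintegral_map (Kernel.measurable_kernel_prodMk_left hs) hf]
  rfl

theorem MeasureTheory.MeasurePreserving.map_comp {α β γ : Type*} [MeasurableSpace α]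
    [MeasurableSpace β] [MeasurableSpace γ] {μ : Measure α} {ν : Measure β} {f : α → β}
    (hf : MeasurePreserving f μ ν) {g : β → γ} (hg : Measurable g) :
    μ.map (g ∘ f) = ν.map g := by
  rw [← Measure.map_map hg hf.measurable, hf.map_eq]

theorem edist_apply_le_of_lipschitz_add {Z N X : Type*} [PseudoEMetricSpace Z]
    [PseudoEMetricSpace N] [PseudoEMetricSpace X] {D : Z × N → X} {K : NNReal}
    (hD : ∀ u v : Z × N, edist (D u) (D v) ≤ K * (edist u.1 v.1 + edist u.2 v.2))
    (z z' : Z) (n : N) (w : Z × N) (x : X) :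
    edist (D (z, n)) x ≤
      K * edist z z' + K * (edist z' w.1 + edist n w.2) + edist (D w) x := by
  calc edist (D (z, n)) x ≤ edist (D (z, n)) (D (z', n)) + edist (D (z', n)) (D w)
          + edist (D w) x := edist_triangle4 _ _ _ _
    _ ≤ _ := by
      gcongr
      · simpa using hD (z, n) (z', n)
      · exact hD (z', n) w

theorem lintegral_edist_apply_le_of_lipschitz_add {Ω Z N X : Type*} [MeasurableSpace Ω]
    [PseudoEMetricSpace Z] [MeasurableSpace Z] [OpensMeasurableSpace Z] [SecondCountableTopology Z]
    [PseudoEMetricSpace N] [MeasurableSpace N] [OpensMeasurableSpace N] [SecondCountableTopology N]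
    [PseudoEMetricSpace X] {D : Z × N → X} {K : NNReal}
    (hD : ∀ u v : Z × N, edist (D u) (D v) ≤ K * (edist u.1 v.1 + edist u.2 v.2))
    (μ : Measure Ω) {S T : Ω → Z} {M : Ω → N} {W : Ω → Z × N} (Y : Ω → X)
    (hS : Measurable S) (hT : Measurable T) (hM : Measurable M) (hW : Measurable W) :
    ∫⁻ ω, edist (D (S ω, M ω)) (Y ω) ∂μ ≤
      K * ∫⁻ ω, edist (S ω) (T ω) ∂μ
        + K * ∫⁻ ω, (edist (T ω) (W ω).1 + edist (M ω) (W ω).2) ∂μ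
        + ∫⁻ ω, edist (D (W ω)) (Y ω) ∂μ := by
  have h₁ : Measurable fun ω => edist (S ω) (T ω) := hS.edist hT
  have h₂ : Measurable fun ω => edist (T ω) (W ω).1 + edist (M ω) (W ω).2 :=
    (hT.edist hW.fst).add (hM.edist hW.snd)
  calc ∫⁻ ω, edist (D (S ω, M ω)) (Y ω) ∂μ
      ≤ ∫⁻ ω, (K * edist (S ω) (T ω) + K * (edist (T ω) (W ω).1 + edist (M ω) (W ω).2)
          + edist (D (W ω)) (Y ω)) ∂μ :=
        lintegral_mono fun ω => edist_apply_le_of_lipschitz_add hD _ _ _ _ _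
    _ = _ := by
      have h₁₂ : Measurable fun ω =>
          K * edist (S ω) (T ω) + K * (edist (T ω) (W ω).1 + edist (M ω) (W ω).2) :=
        (h₁.const_mul _).add (h₂.const_mul _)
      rw [lintegral_add_left h₁₂, lintegral_add_left (h₁.const_mul _),
        lintegral_const_mul _ h₁, lintegral_const_mul _ h₂]

theorem exists_glued_coupling {Xj Z Ni Nj : Type*} [MeasurableSpace Xj] [StandardBorelSpace Xj]
    [MeasurableSpace Z] [StandardBorelSpace Z] [MeasurableSpace Ni]
    [MeasurableSpace Nj] [StandardBorelSpace Nj]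
    (PXj : Measure Xj) [IsProbabilityMeasure PXj] (PZ : Measure Z)
    (PNi : Measure Ni) [IsProbabilityMeasure PNi] (PNj : Measure Nj) [IsProbabilityMeasure PNj]
    (Ej : Xj → Z × Nj)
    (γ₁ : Measure ((Z × Ni) × (Z × Ni))) [IsProbabilityMeasure γ₁]
    (hγ₁snd : γ₁.map Prod.snd = PZ.prod PNi)
    (γ₂ : Measure ((Z × Nj) × (Z × Nj))) [IsProbabilityMeasure γ₂]
    (hγ₂fst : γ₂.map Prod.fst = PZ.prod PNj)
    (hγ₂snd : γ₂.map Prod.snd = PXj.map Ej) :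
    -- a sample point is `((((u, v), n), w), y)`
    ∃ ξ : Measure (((((Z × Ni) × (Z × Ni)) × Nj) × (Z × Nj)) × Xj),
      IsProbabilityMeasure ξ ∧
      MeasurePreserving (fun q => q.1.1) ξ (γ₁.prod PNj) ∧
      MeasurePreserving (fun q => ((q.1.1.1.2.1, q.1.1.2), q.1.2)) ξ γ₂ ∧
      MeasurePreserving (fun q => (q.1.2, q.2)) ξ (PXj.map fun y => (Ej y, y)) := by
  have : Nonempty (Z × Nj) := (Measure.nonempty_of_neZero γ₂).map Prod.fst
  have : Nonempty Xj := Measure.nonempty_of_neZero PXj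
  have hvn : MeasurePreserving (fun p : ((Z × Ni) × (Z × Ni)) × Nj => (p.1.2.1, p.2))
      (γ₁.prod PNj) (PZ.prod PNj) :=
    (measurePreserving_fst.comp ⟨measurable_snd, hγ₁snd⟩).prod (.id PNj)
  obtain ⟨ξ₁, _, hξ₁fst, hξ₁γ₂⟩ :=
    (γ₁.prod PNj).exists_gluing hvn.measurable γ₂ (hγ₂fst.trans hvn.map_eq.symm)
  obtain ⟨ξ, _, hξfst, hξρ⟩ :=
    ξ₁.exists_gluing measurable_snd (PXj.map fun y => (Ej y, y))
      ((Measure.fst_map_prodMk measurable_id).trans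
        (MeasurePreserving.comp ⟨measurable_snd, hγ₂snd⟩ hξ₁γ₂).map_eq.symm)
  exact ⟨ξ, ‹_›, hξ₁fst.comp hξfst, hξ₁γ₂.comp hξfst, hξρ⟩

theorem lintegral_edist_le_of_couplings {Ω Xj Z Ni Nj : Type*} [MeasurableSpace Ω]
    [PseudoEMetricSpace Xj] [MeasurableSpace Xj] [OpensMeasurableSpace Xj]
    [SecondCountableTopology Xj]
    [PseudoEMetricSpace Z] [MeasurableSpace Z] [OpensMeasurableSpace Z] [SecondCountableTopology Z]
    [PseudoEMetricSpace Ni] [MeasurableSpace Ni]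
    [PseudoEMetricSpace Nj] [MeasurableSpace Nj] [OpensMeasurableSpace Nj]
    [SecondCountableTopology Nj]
    {PXj : Measure Xj} {Ej : Xj → Z × Nj} {Dj : Z × Nj → Xj} (hEj : Measurable Ej)
    (hDj : Measurable Dj) {γj : NNReal}
    (hLip : ∀ u v : Z × Nj,
      edist (Dj u) (Dj v) ≤ (γj : ENNReal) * (edist u.1 v.1 + edist u.2 v.2))
    {γ₁ : Measure ((Z × Ni) × (Z × Ni))} {γ₂ : Measure ((Z × Nj) × (Z × Nj))}
    {ξ : Measure Ω} {P : Ω → (Z × Ni) × (Z × Ni)} {M : Ω → Nj} {W : Ω → Z × Nj}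
    {Y : Ω → Xj}
    (hP : MeasurePreserving P ξ γ₁)
    (hW : MeasurePreserving (fun ω => (((P ω).2.1, M ω), W ω)) ξ γ₂)
    (hY : MeasurePreserving (fun ω => (W ω, Y ω)) ξ (PXj.map fun y => (Ej y, y))) :
    ∫⁻ ω, edist (Dj ((P ω).1.1, M ω)) (Y ω) ∂ξ ≤
      (γj : ENNReal) * (∫⁻ p, (edist p.1.1 p.2.1 + edist p.1.2 p.2.2) ∂γ₁)
        + (γj : ENNReal) * (∫⁻ p, (edist p.1.1 p.2.1 + edist p.1.2 p.2.2) ∂γ₂)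
        + ∫⁻ x, edist x (Dj (Ej x)) ∂PXj := by
  have hM : Measurable M := measurable_fst.snd.comp hW.measurable
  have h₁ : ∫⁻ ω, edist (P ω).1.1 (P ω).2.1 ∂ξ ≤
      ∫⁻ p, (edist p.1.1 p.2.1 + edist p.1.2 p.2.2) ∂γ₁ :=
    (hP.lintegral_comp (f := fun s => edist s.1.1 s.2.1) (by fun_prop)).trans_le
      (lintegral_mono fun _ => le_self_add)
  have h₂ : ∫⁻ ω, (edist (P ω).2.1 (W ω).1 + edist (M ω) (W ω).2) ∂ξ =
      ∫⁻ p, (edist p.1.1 p.2.1 + edist p.1.2 p.2.2) ∂γ₂ :=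
    hW.lintegral_comp (f := fun s => edist s.1.1 s.2.1 + edist s.1.2 s.2.2) (by fun_prop)
  have h₃ : ∫⁻ ω, edist (Dj (W ω)) (Y ω) ∂ξ = ∫⁻ x, edist x (Dj (Ej x)) ∂PXj := by
    rw [hY.lintegral_comp (f := fun s => edist (Dj s.1) s.2) (by fun_prop),
      lintegral_map (by fun_prop) (by fun_prop)]
    exact lintegral_congr fun _ => edist_comm _ _
  calc ∫⁻ ω, edist (Dj ((P ω).1.1, M ω)) (Y ω) ∂ξ
      ≤ _ := lintegral_edist_apply_le_of_lipschitz_add hLip ξ Y (T := fun ω => (P ω).2.1)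
          (W := W) (measurable_fst.fst.comp hP.measurable) (measurable_snd.fst.comp hP.measurable)
          hM (measurable_snd.comp hW.measurable)
    _ ≤ _ := by rw [h₂, h₃]; gcongr

theorem transport_error_bound_general
    {Xi Xj Z Ni Nj : Type*}
    [MeasurableSpace Xi]
    [MetricSpace Xj] [CompleteSpace Xj] [TopologicalSpace.SeparableSpace Xj]
    [MeasurableSpace Xj] [BorelSpace Xj]
    [MetricSpace Z] [CompleteSpace Z] [TopologicalSpace.SeparableSpace Z]
    [MeasurableSpace Z] [BorelSpace Z]
    [MetricSpace Ni] [MeasurableSpace Ni]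
    [MetricSpace Nj] [CompleteSpace Nj] [TopologicalSpace.SeparableSpace Nj]
    [MeasurableSpace Nj] [BorelSpace Nj]
    (PXi : Measure Xi) [IsProbabilityMeasure PXi]
    (PXj : Measure Xj) [IsProbabilityMeasure PXj]
    (PZ : Measure Z)
    (PNi : Measure Ni) [IsProbabilityMeasure PNi]
    (PNj : Measure Nj) [IsProbabilityMeasure PNj]
    (Ei : Xi → Z × Ni) (Ej : Xj → Z × Nj) (Dj : Z × Nj → Xj)
    (hEi : Measurable Ei) (hEj : Measurable Ej) (hDj : Measurable Dj)
    (γj : NNReal)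
    (hLip : ∀ u v : Z × Nj,
      edist (Dj u) (Dj v) ≤ (γj : ENNReal) * (edist u.1 v.1 + edist u.2 v.2))
    (γ₁ : Measure ((Z × Ni) × (Z × Ni))) [IsProbabilityMeasure γ₁]
    (hγ₁fst : γ₁.map Prod.fst = PXi.map Ei)
    (hγ₁snd : γ₁.map Prod.snd = PZ.prod PNi)
    (γ₂ : Measure ((Z × Nj) × (Z × Nj))) [IsProbabilityMeasure γ₂]
    (hγ₂fst : γ₂.map Prod.fst = PZ.prod PNj)
    (hγ₂snd : γ₂.map Prod.snd = PXj.map Ej) :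
    ∃ π : Measure (Xj × Xj), IsProbabilityMeasure π ∧
      π.map Prod.fst = Measure.map (fun p : Xi × Nj => Dj ((Ei p.1).1, p.2)) (PXi.prod PNj) ∧
      π.map Prod.snd = PXj ∧
      ∫⁻ p, edist p.1 p.2 ∂π ≤
        (γj : ENNReal) * (∫⁻ p, (edist p.1.1 p.2.1 + edist p.1.2 p.2.2) ∂γ₁)
        + (γj : ENNReal) * (∫⁻ p, (edist p.1.1 p.2.1 + edist p.1.2 p.2.2) ∂γ₂)
        + ∫⁻ x, edist x (Dj (Ej x)) ∂PXj := by
  obtain ⟨ξ, _, huvn, hvnw, hwy⟩ :=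
    exists_glued_coupling PXj PZ PNi PNj Ej γ₁ hγ₁snd γ₂ hγ₂fst hγ₂snd
  set F : ((((Z × Ni) × (Z × Ni)) × Nj) × (Z × Nj)) × Xj → Xj × Xj :=
    fun q => (Dj (q.1.1.1.1.1, q.1.1.2), q.2)
  have hF : Measurable F := by fun_prop
  have hun : MeasurePreserving (fun p : ((Z × Ni) × (Z × Ni)) × Nj => (p.1.1, p.2))
      (γ₁.prod PNj) ((PXi.prod PNj).map (Prod.map Ei id)) := by
    rw [← Measure.map_prod_map _ _ hEi measurable_id, Measure.map_id]
    exact MeasurePreserving.prod ⟨measurable_fst, hγ₁fst⟩ (.id PNj)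
  have hy : MeasurePreserving Prod.snd (PXj.map fun y => (Ej y, y)) PXj :=
    ⟨measurable_snd, (Measure.snd_map_prodMk hEj).trans Measure.map_id'⟩
  refine ⟨ξ.map F, Measure.isProbabilityMeasure_map hF.aemeasurable, ?_, ?_, ?_⟩
  · rw [Measure.map_map measurable_fst hF]
    calc ξ.map (Prod.fst ∘ F) = (γ₁.prod PNj).map fun p => Dj (p.1.1.1, p.2) :=
          huvn.map_comp (g := fun p => Dj (p.1.1.1, p.2)) (by fun_prop)
      _ = ((PXi.prod PNj).map (Prod.map Ei id)).map fun a => Dj (a.1.1, a.2) :=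
          hun.map_comp (g := fun a => Dj (a.1.1, a.2)) (by fun_prop)
      _ = _ := Measure.map_map (by fun_prop) (by fun_prop)
  · rw [Measure.map_map measurable_snd hF]
    exact (hy.comp hwy).map_eq
  · rw [lintegral_map (by fun_prop) hF]
    exact lintegral_edist_le_of_couplings hEj hDj hLip (measurePreserving_fst.comp huvn) hvnw hwy

/-- Transport error bound (coupling form). If `D_j` is `γ_j`-Lipschitz with respect to the sum
metric on `Z × N_j`, then for any coupling `γ₁` of `E_i # P_{X_i}` and `P_Z ⊗ P_{N_i}` and any
coupling `γ₂` of `P_Z ⊗ P_{N_j}` and `E_j # P_{X_j}`, there is a coupling `π` of the translated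
distribution `Q_{X_{i→j}}` and `P_{X_j}` whose cost is bounded by
`γ_j ⬝ cost(γ₁) + γ_j ⬝ cost(γ₂) + (expected reconstruction loss in domain j)`,
where costs are with respect to the sum metrics `d̃`. -/
theorem transport_error_bound
    {Xi Xj Z Ni Nj : Type*}
    [MetricSpace Xi] [CompleteSpace Xi] [TopologicalSpace.SeparableSpace Xi]
    [MeasurableSpace Xi] [BorelSpace Xi]
    [MetricSpace Xj] [CompleteSpace Xj] [TopologicalSpace.SeparableSpace Xj]
    [MeasurableSpace Xj] [BorelSpace Xj]
    [MetricSpace Z] [CompleteSpace Z] [TopologicalSpace.SeparableSpace Z]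
    [MeasurableSpace Z] [BorelSpace Z]
    [MetricSpace Ni] [CompleteSpace Ni] [TopologicalSpace.SeparableSpace Ni]
    [MeasurableSpace Ni] [BorelSpace Ni]
    [MetricSpace Nj] [CompleteSpace Nj] [TopologicalSpace.SeparableSpace Nj]
    [MeasurableSpace Nj] [BorelSpace Nj]
    (PXi : Measure Xi) [IsProbabilityMeasure PXi]
    (PXj : Measure Xj) [IsProbabilityMeasure PXj]
    (PZ : Measure Z) [IsProbabilityMeasure PZ]
    (PNi : Measure Ni) [IsProbabilityMeasure PNi]
    (PNj : Measure Nj) [IsProbabilityMeasure PNj]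
    (Ei : Xi → Z × Ni) (Ej : Xj → Z × Nj) (Dj : Z × Nj → Xj)
    (hEi : Measurable Ei) (hEj : Measurable Ej) (hDj : Measurable Dj)
    (γj : NNReal)
    (hLip : ∀ u v : Z × Nj,
      edist (Dj u) (Dj v) ≤ (γj : ENNReal) * (edist u.1 v.1 + edist u.2 v.2))
    (γ₁ : Measure ((Z × Ni) × (Z × Ni))) [IsProbabilityMeasure γ₁]
    (hγ₁fst : γ₁.map Prod.fst = PXi.map Ei)
    (hγ₁snd : γ₁.map Prod.snd = PZ.prod PNi)
    (γ₂ : Measure ((Z × Nj) × (Z × Nj))) [IsProbabilityMeasure γ₂]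
    (hγ₂fst : γ₂.map Prod.fst = PZ.prod PNj)
    (hγ₂snd : γ₂.map Prod.snd = PXj.map Ej) :
    ∃ π : Measure (Xj × Xj), IsProbabilityMeasure π ∧
      π.map Prod.fst = Measure.map (fun p : Xi × Nj => Dj ((Ei p.1).1, p.2)) (PXi.prod PNj) ∧
      π.map Prod.snd = PXj ∧
      ∫⁻ p, edist p.1 p.2 ∂π ≤
        (γj : ENNReal) * (∫⁻ p, (edist p.1.1 p.2.1 + edist p.1.2 p.2.2) ∂γ₁)
        + (γj : ENNReal) * (∫⁻ p, (edist p.1.1 p.2.1 + edist p.1.2 p.2.2) ∂γ₂)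
        + ∫⁻ x, edist x (Dj (Ej x)) ∂PXj :=
  transport_error_bound_general PXi PXj PZ PNi PNj Ei Ej Dj hEi hEj hDj γj hLip γ₁ hγ₁fst hγ₁snd γ₂
    hγ₂fst hγ₂snd
end

section
/- Fix domains i and j and suppose D_j : 𝒵 × 𝒩_j → 𝒳_j is γ_j-Lipschitz. Define Q_{X_{i→j}} as the pushforward of P_{X_i} ⊗ P_{N_j} under (x, n) ↦ D_j(π^Z(E_i(x)), n). Then for every coupling γ of E_i # P_{X_i} and P_Z ⊗ P_{N_i} (measures on 𝒵 × 𝒩_i), there exists a coupling π of Q_{X_{i→j}} and the pushforward D_j # (P_Z ⊗ P_{N_j}) such that ∫ d_j(x, y) dπ(x, y) ≤ γ_j ∫ d̃_i(u, v) dγ(u, v). -/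
/-!
Draw `(u, v) ∼ γ` and a single fresh noise `n ∼ P_{N_j}` independent of it, and decode both
latent parts with that same noise: `(D_j (π^Z u, n), D_j (π^Z v, n))`. Since `γ` couples
`E_i # P_{X_i}` with `P_Z ⊗ P_{N_i}`, the two coordinates have laws `Q_{X_{i→j}}` and
`D_j # (P_Z ⊗ P_{N_j})`. Because the noise is shared, the Lipschitz bound for `D_j` only sees the
latent distance, so the cost is at most `γ_j 𝔼_γ d_Z(π^Z u, π^Z v) ≤ γ_j 𝔼_γ d̃_i(u, v)`.
-/

open MeasureTheory

namespace MeasureTheory.Measure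

variable {α β N X Y : Type*} [MeasurableSpace α] [MeasurableSpace β] [MeasurableSpace N]
  [MeasurableSpace X] [MeasurableSpace Y]

lemma map_prod_map_left {μ : Measure α} {ν : Measure N} [SFinite μ] [SFinite ν]
    {e : α → β} {f : β × N → X} (he : Measurable e) (hf : Measurable f) :
    ((μ.map e).prod ν).map f = (μ.prod ν).map fun p ↦ f (e p.1, p.2) := by
  rw [← Measure.map_id (μ := ν), map_prod_map μ ν he measurable_id, Measure.map_id,
    map_map hf (he.prodMap measurable_id)]
  rfl

noncomputable def sharedNoiseCoupling (γ : Measure (α × β)) (ρ : Measure N)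
    (f : α × N → X) (g : β × N → Y) : Measure (X × Y) :=
  (γ.prod ρ).map fun q ↦ (f (q.1.1, q.2), g (q.1.2, q.2))

variable {γ : Measure (α × β)} {ρ : Measure N} {f : α × N → X} {g : β × N → Y}

lemma measurable_sharedNoise (hf : Measurable f) (hg : Measurable g) :
    Measurable fun q : (α × β) × N ↦ (f (q.1.1, q.2), g (q.1.2, q.2)) :=
  (hf.comp (measurable_fst.fst.prodMk measurable_snd)).prodMk
    (hg.comp (measurable_fst.snd.prodMk measurable_snd))

lemma isProbabilityMeasure_sharedNoiseCoupling [IsProbabilityMeasure γ] [IsProbabilityMeasure ρ]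
    (hf : Measurable f) (hg : Measurable g) :
    IsProbabilityMeasure (sharedNoiseCoupling γ ρ f g) :=
  isProbabilityMeasure_map (measurable_sharedNoise hf hg).aemeasurable

lemma sharedNoiseCoupling_map_fst [SFinite γ] [SFinite ρ] (hf : Measurable f)
    (hg : Measurable g) :
    (sharedNoiseCoupling γ ρ f g).map Prod.fst = ((γ.map Prod.fst).prod ρ).map f := by
  rw [sharedNoiseCoupling, map_map measurable_fst (measurable_sharedNoise hf hg),
    map_prod_map_left measurable_fst hf]
  rfl

lemma sharedNoiseCoupling_map_snd [SFinite γ] [SFinite ρ] (hf : Measurable f)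
    (hg : Measurable g) :
    (sharedNoiseCoupling γ ρ f g).map Prod.snd = ((γ.map Prod.snd).prod ρ).map g := by
  rw [sharedNoiseCoupling, map_map measurable_snd (measurable_sharedNoise hf hg),
    map_prod_map_left measurable_snd hg]
  rfl

lemma lintegral_edist_sharedNoiseCoupling_le [PseudoEMetricSpace X] [OpensMeasurableSpace X]
    [SecondCountableTopology X] [IsProbabilityMeasure ρ] {g : β × N → X}
    (hf : Measurable f) (hg : Measurable g)
    {c : α × β → ENNReal} (hc : Measurable c)
    (hfg : ∀ a b n, edist (f (a, n)) (g (b, n)) ≤ c (a, b)) :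
    ∫⁻ p, edist p.1 p.2 ∂(sharedNoiseCoupling γ ρ f g) ≤ ∫⁻ p, c p ∂γ := by
  rw [sharedNoiseCoupling, lintegral_map measurable_edist (measurable_sharedNoise hf hg)]
  calc ∫⁻ q, edist (f (q.1.1, q.2)) (g (q.1.2, q.2)) ∂(γ.prod ρ)
      ≤ ∫⁻ q, c q.1 ∂(γ.prod ρ) := lintegral_mono fun q ↦ hfg q.1.1 q.1.2 q.2
    _ = ∫⁻ p, c p ∂γ := measurePreserving_fst.lintegral_comp hc

end MeasureTheory.Measure

theorem transport_error_first_term_general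
    {Xi Xj Z Ni Nj : Type*}
    [MeasurableSpace Xi]
    [MetricSpace Xj] [TopologicalSpace.SeparableSpace Xj]
    [MeasurableSpace Xj] [BorelSpace Xj]
    [MetricSpace Z] [TopologicalSpace.SeparableSpace Z]
    [MeasurableSpace Z] [BorelSpace Z]
    [MetricSpace Ni]
    [MeasurableSpace Ni]
    [MetricSpace Nj]
    [MeasurableSpace Nj]
    (PXi : Measure Xi) [IsProbabilityMeasure PXi]
    (PZ : Measure Z) [IsProbabilityMeasure PZ]
    (PNi : Measure Ni) [IsProbabilityMeasure PNi]
    (PNj : Measure Nj) [IsProbabilityMeasure PNj]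
    (Ei : Xi → Z × Ni) (Dj : Z × Nj → Xj)
    (hEi : Measurable Ei) (hDj : Measurable Dj)
    (γj : NNReal)
    (hLip : ∀ u v : Z × Nj,
      edist (Dj u) (Dj v) ≤ (γj : ENNReal) * (edist u.1 v.1 + edist u.2 v.2))
    (γ : Measure ((Z × Ni) × (Z × Ni))) [IsProbabilityMeasure γ]
    (hγfst : γ.map Prod.fst = PXi.map Ei)
    (hγsnd : γ.map Prod.snd = PZ.prod PNi) :
    ∃ π : Measure (Xj × Xj), IsProbabilityMeasure π ∧
      π.map Prod.fst = Measure.map (fun p : Xi × Nj => Dj ((Ei p.1).1, p.2)) (PXi.prod PNj) ∧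
      π.map Prod.snd = (PZ.prod PNj).map Dj ∧
      ∫⁻ p, edist p.1 p.2 ∂π ≤
        (γj : ENNReal) * ∫⁻ p, (edist p.1.1 p.2.1 + edist p.1.2 p.2.2) ∂γ := by
  set decode : (Z × Ni) × Nj → Xj := fun p ↦ Dj (p.1.1, p.2)
  have hdecode : Measurable decode := hDj.comp (measurable_fst.fst.prodMk measurable_snd)
  have hmeas_cost :
      Measurable fun p : (Z × Ni) × (Z × Ni) ↦ (γj : ENNReal) * edist p.1.1 p.2.1 :=
    (measurable_fst.fst.edist measurable_snd.fst).const_mul _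
  refine ⟨Measure.sharedNoiseCoupling γ PNj decode decode,
    Measure.isProbabilityMeasure_sharedNoiseCoupling hdecode hdecode, ?_, ?_, ?_⟩
  · rw [Measure.sharedNoiseCoupling_map_fst hdecode hdecode, hγfst,
      Measure.map_prod_map_left hEi hdecode]
  · rw [Measure.sharedNoiseCoupling_map_snd hdecode hdecode, hγsnd]
    conv_rhs => rw [← (measurePreserving_fst (μ := PZ) (ν := PNi)).map_eq,
      Measure.map_prod_map_left measurable_fst hDj]
  · calc ∫⁻ p, edist p.1 p.2 ∂(Measure.sharedNoiseCoupling γ PNj decode decode)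
        ≤ ∫⁻ p, (γj : ENNReal) * edist p.1.1 p.2.1 ∂γ :=
          Measure.lintegral_edist_sharedNoiseCoupling_le hdecode hdecode hmeas_cost
            fun u v n ↦ by simpa using hLip (u.1, n) (v.1, n)
      _ ≤ (γj : ENNReal) * ∫⁻ p, (edist p.1.1 p.2.1 + edist p.1.2 p.2.2) ∂γ := by
          rw [← lintegral_const_mul' _ _ ENNReal.coe_ne_top]
          gcongr with p
          exact le_self_add

/-- First term of the transport error bound: if `D_j` is `γ_j`-Lipschitz with respect to the sum
metric on `Z × N_j`, then for any coupling `γ` of `E_i # P_{X_i}` and `P_Z ⊗ P_{N_i}`, there is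
a coupling `π` of the translated distribution `Q_{X_{i→j}}` and `D_j # (P_Z ⊗ P_{N_j})` with
cost at most `γ_j` times the cost of `γ` (with respect to the sum metric `d̃_i`). -/
theorem transport_error_first_term
    {Xi Xj Z Ni Nj : Type*}
    [MetricSpace Xi] [CompleteSpace Xi] [TopologicalSpace.SeparableSpace Xi]
    [MeasurableSpace Xi] [BorelSpace Xi]
    [MetricSpace Xj] [CompleteSpace Xj] [TopologicalSpace.SeparableSpace Xj]
    [MeasurableSpace Xj] [BorelSpace Xj]
    [MetricSpace Z] [CompleteSpace Z] [TopologicalSpace.SeparableSpace Z]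
    [MeasurableSpace Z] [BorelSpace Z]
    [MetricSpace Ni] [CompleteSpace Ni] [TopologicalSpace.SeparableSpace Ni]
    [MeasurableSpace Ni] [BorelSpace Ni]
    [MetricSpace Nj] [CompleteSpace Nj] [TopologicalSpace.SeparableSpace Nj]
    [MeasurableSpace Nj] [BorelSpace Nj]
    (PXi : Measure Xi) [IsProbabilityMeasure PXi]
    (PXj : Measure Xj) [IsProbabilityMeasure PXj]
    (PZ : Measure Z) [IsProbabilityMeasure PZ]
    (PNi : Measure Ni) [IsProbabilityMeasure PNi]
    (PNj : Measure Nj) [IsProbabilityMeasure PNj]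
    (Ei : Xi → Z × Ni) (Dj : Z × Nj → Xj)
    (hEi : Measurable Ei) (hDj : Measurable Dj)
    (γj : NNReal)
    (hLip : ∀ u v : Z × Nj,
      edist (Dj u) (Dj v) ≤ (γj : ENNReal) * (edist u.1 v.1 + edist u.2 v.2))
    (γ : Measure ((Z × Ni) × (Z × Ni))) [IsProbabilityMeasure γ]
    (hγfst : γ.map Prod.fst = PXi.map Ei)
    (hγsnd : γ.map Prod.snd = PZ.prod PNi) :
    ∃ π : Measure (Xj × Xj), IsProbabilityMeasure π ∧
      π.map Prod.fst = Measure.map (fun p : Xi × Nj => Dj ((Ei p.1).1, p.2)) (PXi.prod PNj) ∧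
      π.map Prod.snd = (PZ.prod PNj).map Dj ∧
      ∫⁻ p, edist p.1 p.2 ∂π ≤
        (γj : ENNReal) * ∫⁻ p, (edist p.1.1 p.2.1 + edist p.1.2 p.2.2) ∂γ :=
  transport_error_first_term_general PXi PZ PNi PNj Ei Dj hEi hDj γj hLip γ hγfst hγsnd
end

section
/- (Deterministic cycle consistency) Let 𝒳_i and 𝒳_j be standard Borel spaces with Borel probability measures P_{X_i}, P_{X_j}, and let 𝒵 be a standard Borel space with probability measure P_Z. Let E_i : 𝒳_i → 𝒵, D_i : 𝒵 → 𝒳_i, E_j : 𝒳_j → 𝒵, D_j : 𝒵 → 𝒳_j be measurable maps such that D_i(E_i(x)) = x for P_{X_i}-a.e. x, E_i # P_{X_i} = P_Z, D_j(E_j(y)) = y for P_{X_j}-a.e. y, and E_j # P_{X_j} = P_Z. Then the composed round-trip translation is the identity almost everywhere: D_i(E_j(D_j(E_i(x)))) = x for P_{X_i}-almost every x. -/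
open MeasureTheory

/-- Deterministic cycle consistency: two optimal deterministic autoencoders into a shared
latent space compose to the identity almost everywhere:
`D_i ∘ E_j ∘ D_j ∘ E_i = id` holds `P_{X_i}`-a.e. -/
theorem deterministic_cycle_consistency
    {Xi Xj Z : Type*}
    [MeasurableSpace Xi] [StandardBorelSpace Xi]
    [MeasurableSpace Xj] [StandardBorelSpace Xj]
    [MeasurableSpace Z] [StandardBorelSpace Z]
    (PXi : Measure Xi) [IsProbabilityMeasure PXi]
    (PXj : Measure Xj) [IsProbabilityMeasure PXj]
    (PZ : Measure Z) [IsProbabilityMeasure PZ]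
    (Ei : Xi → Z) (Di : Z → Xi) (Ej : Xj → Z) (Dj : Z → Xj)
    (hEi : Measurable Ei) (hDi : Measurable Di)
    (hEj : Measurable Ej) (hDj : Measurable Dj)
    (hreci : ∀ᵐ x ∂PXi, Di (Ei x) = x)
    (hlati : PXi.map Ei = PZ)
    (hrecj : ∀ᵐ y ∂PXj, Dj (Ej y) = y)
    (hlatj : PXj.map Ej = PZ) :
    ∀ᵐ x ∂PXi, Di (Ej (Dj (Ei x))) = x := by
  letI := upgradeStandardBorel Z
  have hSmeas : MeasurableSet {z : Z | Ej (Dj z) = z} :=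
    (hEj.comp hDj).stronglyMeasurable.measurableSet_eq_fun stronglyMeasurable_id
  have hS : ∀ᵐ z ∂PZ, Ej (Dj z) = z := by
    rw [← hlatj, ae_map_iff hEj.aemeasurable hSmeas]
    filter_upwards [hrecj] with y hy
    simp only [Set.mem_setOf_eq, hy]
  have hS' : ∀ᵐ x ∂PXi, Ej (Dj (Ei x)) = Ei x := by
    rw [← hlati] at hS
    exact (ae_map_iff hEi.aemeasurable hSmeas).mp hS
  filter_upwards [hS', hreci] with x h1 h2
  rw [h1, h2]
end
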